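/- arXiv:2602.03995 — 10 statements merged into one kernel-verified Lean document; each statement's English description precedes it below -/
import Mathlib

section
/- Let h ≥ 0 and let r_HH, r_HL, r_LH, r_LL be real numbers with r_HH ≥ r_HL ≥ r_LL, r_HH ≥ r_LH ≥ r_LL, and r_HH + r_LL ≥ r_HL + r_LH. Suppose V : ℕ × ℕ → ℝ satisfies, for all x, y ∈ ℕ: (i) V(x+1,y) − V(x,y) ≤ r_HH + h; (ii) V(x,y+1) − V(x,y) ≤ r_LL + h; (iii) r_HL − r_LL ≤ V(x+1,y) − V(x,y+1) ≤ r_HH − r_LH. Then for all x ≥ 1 and y ≥ 1: (a) r_HH + h + V(x−1,y) ≥ V(x,y); (b) r_LH + h + V(x,y−1) ≥ V(x,y); (c) r_HH + h + V(x−1,y) ≥ r_LH + h + V(x,y−1); (d) r_LL + h + V(x,y−1) ≥ V(x,y); (e) r_LL + h + V(x,y−1) ≥ r_HL + h + V(x−1,y). (Consequently, when an H-type demand arrives it is optimal to match her with an H-type supply if available and otherwise with an L-type supply, and when an L-type demand arrives it is optimal to match her with an L-type supply if available rather than with an H-type supply or not at all.) -/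
theorem greedy_matching_comparisons_general
    (h rHH rHL rLH rLL : ℝ)
    (h4 : rLH ≥ rLL)
    (V : ℕ × ℕ → ℝ)
    (hi : ∀ x y : ℕ, V (x + 1, y) - V (x, y) ≤ rHH + h)
    (hii : ∀ x y : ℕ, V (x, y + 1) - V (x, y) ≤ rLL + h)
    (hiii : ∀ x y : ℕ, rHL - rLL ≤ V (x + 1, y) - V (x, y + 1) ∧
        V (x + 1, y) - V (x, y + 1) ≤ rHH - rLH) :
    ∀ x y : ℕ, 1 ≤ x → 1 ≤ y →
      (rHH + h + V (x - 1, y) ≥ V (x, y)) ∧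
      (rLH + h + V (x, y - 1) ≥ V (x, y)) ∧
      (rHH + h + V (x - 1, y) ≥ rLH + h + V (x, y - 1)) ∧
      (rLL + h + V (x, y - 1) ≥ V (x, y)) ∧
      (rLL + h + V (x, y - 1) ≥ rHL + h + V (x - 1, y)) := by
  intro x y hx hy
  obtain ⟨a, rfl⟩ := Nat.exists_eq_add_one.mpr hx
  obtain ⟨b, rfl⟩ := Nat.exists_eq_add_one.mpr hy
  simp only [Nat.add_sub_cancel]
  have hH := hi a (b + 1)
  have hL := hii (a + 1) b
  obtain ⟨hHL, hLH⟩ := hiii a b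
  exact ⟨by linarith, by linarith, by linarith, by linarith, by linarith⟩

/-- Greedy part of the optimal centralized matching policy: comparisons of
continuation values showing that an arriving H-type demand agent should be
matched with an H-type supply if available (else an L-type supply), and an
arriving L-type demand agent should be matched with an L-type supply if
available rather than with an H-type supply or not at all. -/
theorem greedy_matching_comparisons
    (h rHH rHL rLH rLL : ℝ) (hh : 0 ≤ h)
    (h1 : rHH ≥ rHL) (h2 : rHL ≥ rLL) (h3 : rHH ≥ rLH) (h4 : rLH ≥ rLL)
    (h5 : rHH + rLL ≥ rHL + rLH)
    (V : ℕ × ℕ → ℝ)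
    (hi : ∀ x y : ℕ, V (x + 1, y) - V (x, y) ≤ rHH + h)
    (hii : ∀ x y : ℕ, V (x, y + 1) - V (x, y) ≤ rLL + h)
    (hiii : ∀ x y : ℕ, rHL - rLL ≤ V (x + 1, y) - V (x, y + 1) ∧
        V (x + 1, y) - V (x, y + 1) ≤ rHH - rLH) :
    ∀ x y : ℕ, 1 ≤ x → 1 ≤ y →
      (rHH + h + V (x - 1, y) ≥ V (x, y)) ∧
      (rLH + h + V (x, y - 1) ≥ V (x, y)) ∧
      (rHH + h + V (x - 1, y) ≥ rLH + h + V (x, y - 1)) ∧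
      (rLL + h + V (x, y - 1) ≥ V (x, y)) ∧
      (rLL + h + V (x, y - 1) ≥ rHL + h + V (x - 1, y)) :=
  greedy_matching_comparisons_general h rHH rHL rLH rLL h4 V hi hii hiii
end

section
/- Let p, q ∈ (0,1) with δ := q(1−p)/(p(1−q)) ≠ 1, let k ≥ 1 be an integer, let r_HH, r_HL, r_LH, r_LL be real numbers, let r := r_HH + r_LL − r_HL − r_LH, and set φ(i) := (1−δ)·δ^i/(1−δ^{k+1}) for i = 0,…,k. Then φ(0)·(pq·r_HH + p(1−q)·r_HL + (1−p)q·r_HH + (1−p)(1−q)·r_LL) + ∑_{l=1}^{k−1} φ(l)·(pq·r_HH + p(1−q)·r_LL + (1−p)q·r_HH + (1−p)(1−q)·r_LL) + φ(k)·(pq·r_HH + p(1−q)·r_LL + (1−p)q·r_LH + (1−p)(1−q)·r_LL) = q·r_HH + (1−q)·r_LL + p(1−q)·(r_HH − r_LH)·(1−δ) − p(1−q)·r·(1−δ)/(1−δ^{k+1}). -/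
/-!
Every per-state payoff equals `R₀ := q r_HH + (1 - q) r_LL` plus a correction living only on
the two boundary states: `x := p (1 - q) (r_HL - r_LL)` at `i = 0` and
`y := (1 - p) q (r_LH - r_HH)` at `i = k`. Since the stationary weights sum to one, the average
revenue is `R₀ + φ(0) x + φ(k) y`. Finally `(1 - p) q = p (1 - q) δ`, and the geometric weights
satisfy `δ φ(k) = φ(0) - (1 - δ)` with `φ(0) = (1 - δ) / (1 - δ^(k+1))`.
-/

open Finset

theorem Finset.sum_range_succ_eq_first_add_sum_Icc_add_last {M : Type*} [AddCommMonoid M]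
    (f : ℕ → M) {k : ℕ} (hk : 1 ≤ k) :
    ∑ i ∈ range (k + 1), f i = f 0 + ∑ i ∈ Icc 1 (k - 1), f i + f k := by
  rw [sum_range_succ, range_eq_Ico, sum_eq_sum_Ico_succ_bot (by omega),
    ← Ico_add_one_right_eq_Icc, Nat.sub_add_cancel hk]

/-- The stationary law of the threshold-`k` system: truncated geometric weights on `{0, …, k}`. -/
noncomputable def truncGeomWeight (δ : ℝ) (k i : ℕ) : ℝ :=
  (1 - δ) * δ ^ i / (1 - δ ^ (k + 1))

section truncGeomWeight

variable {δ : ℝ} {k : ℕ}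

theorem sum_truncGeomWeight (hδ : δ ^ (k + 1) ≠ 1) :
    ∑ i ∈ range (k + 1), truncGeomWeight δ k i = 1 := by
  have hδ1 : δ ≠ 1 := fun h => hδ (by rw [h, one_pow])
  have hD : 1 - δ ^ (k + 1) ≠ 0 := sub_ne_zero.mpr (Ne.symm hδ)
  simp only [truncGeomWeight, ← sum_div, ← mul_sum, geom_sum_eq hδ1]
  rw [div_eq_one_iff_eq hD, ← neg_div_neg_eq, neg_sub, neg_sub,
    mul_div_cancel₀ _ (sub_ne_zero.mpr (Ne.symm hδ1))]

theorem mul_truncGeomWeight_last (hδ : δ ^ (k + 1) ≠ 1) :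
    δ * truncGeomWeight δ k k = truncGeomWeight δ k 0 - (1 - δ) := by
  have hD : 1 - δ ^ (k + 1) ≠ 0 := sub_ne_zero.mpr (Ne.symm hδ)
  unfold truncGeomWeight
  field_simp
  ring

end truncGeomWeight

theorem weighted_sum_const_add_boundary {R : Type*} [CommRing R] (w : ℕ → R) {k : ℕ}
    (hk : 1 ≤ k) (hw : ∑ i ∈ range (k + 1), w i = 1) (c x y : R) :
    w 0 * (c + x) + ∑ l ∈ Icc 1 (k - 1), w l * c + w k * (c + y)
      = c + w 0 * x + w k * y := by
  have hsplit := sum_range_succ_eq_first_add_sum_Icc_add_last w hk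
  rw [hw] at hsplit
  rw [← sum_mul]
  linear_combination -c * hsplit

/-- Long-run average matching revenue of the one-sided-backlog system under the
threshold-`k` policy: weighting per-state expected payoffs by the stationary
probabilities yields the closed-form revenue expression. -/
theorem average_revenue_identity
    (p q δ : ℝ) (hp : p ∈ Set.Ioo (0 : ℝ) 1) (hq : q ∈ Set.Ioo (0 : ℝ) 1)
    (hδ : δ = q * (1 - p) / (p * (1 - q))) (hδ1 : δ ≠ 1)
    (k : ℕ) (hk : 1 ≤ k)
    (rHH rHL rLH rLL r : ℝ) (hr : r = rHH + rLL - rHL - rLH)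
    (φ : ℕ → ℝ) (hφ : ∀ i : ℕ, φ i = (1 - δ) * δ ^ i / (1 - δ ^ (k + 1))) :
    φ 0 * (p * q * rHH + p * (1 - q) * rHL + (1 - p) * q * rHH
        + (1 - p) * (1 - q) * rLL)
      + (∑ l ∈ Finset.Icc 1 (k - 1),
          φ l * (p * q * rHH + p * (1 - q) * rLL + (1 - p) * q * rHH
            + (1 - p) * (1 - q) * rLL))
      + φ k * (p * q * rHH + p * (1 - q) * rLL + (1 - p) * q * rLH
        + (1 - p) * (1 - q) * rLL)
    = q * rHH + (1 - q) * rLL + p * (1 - q) * (rHH - rLH) * (1 - δ)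
      - p * (1 - q) * r * (1 - δ) / (1 - δ ^ (k + 1)) := by
  obtain ⟨hp0, hp1⟩ := hp
  obtain ⟨hq0, hq1⟩ := hq
  have hq1' : 1 - q ≠ 0 := by linarith
  have hδ_rel : (1 - p) * q = p * (1 - q) * δ := by rw [hδ]; field_simp
  have hδ_pow : δ ^ (k + 1) ≠ 1 := by
    have hδ0 : 0 ≤ δ := hδ ▸ div_nonneg (by nlinarith) (by nlinarith)
    rwa [Ne, pow_eq_one_iff_of_nonneg hδ0 k.succ_ne_zero]
  obtain rfl : φ = truncGeomWeight δ k := funext hφ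
  have hφ0 : truncGeomWeight δ k 0 = (1 - δ) / (1 - δ ^ (k + 1)) := by
    rw [truncGeomWeight, pow_zero, mul_one]
  have havg := weighted_sum_const_add_boundary _ hk (sum_truncGeomWeight hδ_pow)
    (q * rHH + (1 - q) * rLL) (p * (1 - q) * (rHL - rLL)) ((1 - p) * q * (rLH - rHH))
  have hmid : p * q * rHH + p * (1 - q) * rLL + (1 - p) * q * rHH + (1 - p) * (1 - q) * rLL
      = q * rHH + (1 - q) * rLL := by ring
  rw [hmid]
  calc _ = q * rHH + (1 - q) * rLL + truncGeomWeight δ k 0 * (p * (1 - q) * (rHL - rLL))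
        + p * (1 - q) * (δ * truncGeomWeight δ k k) * (rLH - rHH) := by
          linear_combination havg + truncGeomWeight δ k k * (rLH - rHH) * hδ_rel
    _ = _ := by rw [mul_truncGeomWeight_last hδ_pow, hφ0, hr]; ring
end

section
/- Let p ∈ (0,1), let h > 0, let r ≥ 0, let r_HH, r_LL ∈ ℝ, and set c := p(1−p)·r. For k ∈ ℕ define W(k) = p·r_HH + (1−p)·r_LL − c/(k+1) − k·h, and define k* := ⌊(−h + √(h² + 4hc))/(2h)⌋ (the floor of a nonnegative real, so k* ∈ ℕ). Then W(k) ≤ W(k*) for every k ∈ ℕ; that is, the threshold k* maximizes the long-run average social welfare of the centralized one-sided-backlog system in the symmetric case p = q. -/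
/-!
Up to a constant, `W k` is minus the cost `c/(k+1) + k h`, and
`cost s - cost t = (t - s) (c - h (s+1)(t+1)) / ((s+1)(t+1))`.
Let `x ≥ 0` be the root of `h x (x+1) = c`, i.e. `x = (-h + √(h² + 4hc))/(2h)`, and `m = ⌊x⌋`.
For `k < m` we have `(k+1)(m+1) ≤ x(x+1)`, and for `k > m` we have `x(x+1) < (k+1)(m+1)`,
so in both cases the sign of `m - k` makes the cost at `m` the smaller one.
-/

open Real

theorem div_add_one_add_mul_le_div_add_one_add_mul {c h s t : ℝ} (hs : 0 < s + 1)
    (ht : 0 < t + 1) (H : 0 ≤ (t - s) * (c - h * (s + 1) * (t + 1))) :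
    c / (t + 1) + t * h ≤ c / (s + 1) + s * h := by
  have hdiff : c / (s + 1) + s * h - (c / (t + 1) + t * h)
      = (t - s) * (c - h * (s + 1) * (t + 1)) / ((s + 1) * (t + 1)) := by
    field_simp
    ring
  have : 0 ≤ (t - s) * (c - h * (s + 1) * (t + 1)) / ((s + 1) * (t + 1)) := by positivity
  linarith

theorem quadratic_root_nonneg {h c : ℝ} (hh : 0 < h) (hc : 0 ≤ c) :
    0 ≤ (-h + √(h ^ 2 + 4 * h * c)) / (2 * h) := by
  have : h ≤ √(h ^ 2 + 4 * h * c) := Real.le_sqrt_of_sq_le (by nlinarith)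
  exact div_nonneg (by linarith) (by positivity)

theorem quadratic_root_mul_add_one {h c : ℝ} (hh : h ≠ 0) (hd : 0 ≤ h ^ 2 + 4 * h * c) :
    h * ((-h + √(h ^ 2 + 4 * h * c)) / (2 * h))
      * ((-h + √(h ^ 2 + 4 * h * c)) / (2 * h) + 1) = c := by
  have hsq := Real.sq_sqrt hd
  generalize √(h ^ 2 + 4 * h * c) = s at hsq ⊢
  field_simp
  linear_combination hsq

theorem floor_sub_mul_sub_nonneg {x : ℝ} (hx : 0 ≤ x) (k : ℕ) :
    0 ≤ ((⌊x⌋₊ : ℝ) - k) * (x * (x + 1) - (k + 1) * (⌊x⌋₊ + 1)) := by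
  have hm_le : (⌊x⌋₊ : ℝ) ≤ x := Nat.floor_le hx
  have hlt_m : x < ⌊x⌋₊ + 1 := Nat.lt_floor_add_one x
  rcases lt_trichotomy k ⌊x⌋₊ with hk | rfl | hk
  · have hk' : (k : ℝ) + 1 ≤ ⌊x⌋₊ := by exact_mod_cast hk
    have : ((k : ℝ) + 1) * (⌊x⌋₊ + 1) ≤ x * (x + 1) := by
      gcongr; linarith
    exact mul_nonneg (by linarith) (by linarith)
  · simp
  · have hk' : (⌊x⌋₊ : ℝ) + 1 ≤ k := by exact_mod_cast hk
    have : x * (x + 1) ≤ ((k : ℝ) + 1) * (⌊x⌋₊ + 1) := by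
      rw [mul_comm ((k : ℝ) + 1)]
      gcongr; linarith
    exact mul_nonneg_of_nonpos_of_nonpos (by linarith) (by linarith)

/-- In the symmetric case `p = q`, the threshold
`k* = ⌊(−h + √(h² + 4hc))/(2h)⌋` maximizes the long-run average social welfare
`W(k) = p·r_HH + (1−p)·r_LL − c/(k+1) − k·h` of the centralized
one-sided-backlog system, where `c = p(1−p)·r`. -/
theorem optimal_threshold_maximizes_welfare
    (p h r rHH rLL c : ℝ) (hp : p ∈ Set.Ioo (0 : ℝ) 1) (hh : 0 < h)
    (hr : 0 ≤ r) (hc : c = p * (1 - p) * r)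
    (W : ℕ → ℝ)
    (hW : ∀ k : ℕ, W k = p * rHH + (1 - p) * rLL - c / (k + 1) - k * h)
    (kstar : ℕ)
    (hks : kstar = ⌊(-h + Real.sqrt (h ^ 2 + 4 * h * c)) / (2 * h)⌋₊) :
    ∀ k : ℕ, W k ≤ W kstar := by
  intro k
  have hc0 : 0 ≤ c := by
    rw [hc]
    exact mul_nonneg (mul_nonneg hp.1.le (sub_nonneg.2 hp.2.le)) hr
  set x := (-h + √(h ^ 2 + 4 * h * c)) / (2 * h)
  have hroot : h * x * (x + 1) = c := quadratic_root_mul_add_one hh.ne' (by positivity)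
  have hsign := floor_sub_mul_sub_nonneg (quadratic_root_nonneg hh hc0) k
  rw [← hks] at hsign
  have hcost : c / (kstar + 1) + kstar * h ≤ c / (k + 1) + k * h := by
    refine div_add_one_add_mul_le_div_add_one_add_mul (by positivity) (by positivity) ?_
    rw [← hroot]
    nlinarith [mul_nonneg hh.le hsign]
  rw [hW, hW]
  linarith
end

section
/- Let δ > 0 with δ ≠ 1, let c > 0 and h > 0, and for k ∈ ℕ and real constant A define W(k) = A − c·(1−δ)/(1−δ^{k+1}) − k·h. Then: (a) for every integer k ≥ 1, W(k) − W(k−1) = c·(1−δ)²·δ^k / ((1−δ^{k+1})(1−δ^k)) − h; and (b) the map k ↦ (1−δ)²·δ^k / ((1−δ^{k+1})(1−δ^k)) is positive and strictly decreasing for integers k ≥ 1. Consequently the sequence of first differences of W is strictly decreasing, so W is unimodal in k. -/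
/-! The first difference of `W` telescopes: `(1-δ)/(1-δ^k) - (1-δ)/(1-δ^(k+1))` collapses to
`(1-δ)²δ^k / ((1-δ^(k+1))(1-δ^k))`, which is positive because `1 - δ^m` has the sign of
`1 - δ` for every `m ≥ 1`. Cross-multiplying two consecutive coefficients, their difference
factors as `(1-δ)³ δ^k (1-δ^(k+1)) (1+δ^(k+1))` over a positive denominator, and
`(1-δ)(1-δ^(k+1)) > 0` for the same sign reason. -/

/-- The coefficient of `c` in the first difference `W k - W (k - 1)`. -/
noncomputable def marginalGain (δ : ℝ) (k : ℕ) : ℝ :=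
  (1 - δ) ^ 2 * δ ^ k / ((1 - δ ^ (k + 1)) * (1 - δ ^ k))

section

variable {δ : ℝ}

theorem one_sub_pow_mul_one_sub_pow_pos (hδ0 : 0 ≤ δ) (hδ1 : δ ≠ 1) {m n : ℕ}
    (hm : m ≠ 0) (hn : n ≠ 0) : 0 < (1 - δ ^ m) * (1 - δ ^ n) := by
  rcases hδ1.lt_or_gt with hlt | hgt
  · have hm' : δ ^ m < 1 := pow_lt_one₀ hδ0 hlt hm
    have hn' : δ ^ n < 1 := pow_lt_one₀ hδ0 hlt hn
    exact mul_pos (by linarith) (by linarith)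
  · have hm' : 1 < δ ^ m := one_lt_pow₀ hgt hm
    have hn' : 1 < δ ^ n := one_lt_pow₀ hgt hn
    exact mul_pos_of_neg_of_neg (by linarith) (by linarith)

theorem one_sub_pow_ne_zero (hδ0 : 0 ≤ δ) (hδ1 : δ ≠ 1) {m : ℕ} (hm : m ≠ 0) :
    1 - δ ^ m ≠ 0 :=
  left_ne_zero_of_mul (one_sub_pow_mul_one_sub_pow_pos hδ0 hδ1 hm hm).ne'

theorem one_sub_div_one_sub_pow_sub_succ {k : ℕ} (hk : 1 - δ ^ k ≠ 0)
    (hk1 : 1 - δ ^ (k + 1) ≠ 0) :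
    (1 - δ) / (1 - δ ^ k) - (1 - δ) / (1 - δ ^ (k + 1)) = marginalGain δ k := by
  unfold marginalGain
  field_simp
  ring

theorem marginalGain_pos (hδ0 : 0 < δ) (hδ1 : δ ≠ 1) {k : ℕ} (hk : 1 ≤ k) :
    0 < marginalGain δ k :=
  div_pos (mul_pos (sq_pos_of_ne_zero (sub_ne_zero.mpr hδ1.symm)) (pow_pos hδ0 k))
    (one_sub_pow_mul_one_sub_pow_pos hδ0.le hδ1 (by omega) (by omega))

theorem marginalGain_succ_lt (hδ0 : 0 < δ) (hδ1 : δ ≠ 1) {k : ℕ} (hk : 1 ≤ k) :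
    marginalGain δ (k + 1) < marginalGain δ k := by
  have hsame : 0 < (1 - δ ^ 1) * (1 - δ ^ (k + 1)) :=
    one_sub_pow_mul_one_sub_pow_pos hδ0.le hδ1 one_ne_zero (by omega)
  have hden : 0 < (1 - δ ^ (k + 1)) * (1 - δ ^ k) :=
    one_sub_pow_mul_one_sub_pow_pos hδ0.le hδ1 (by omega) (by omega)
  have hden' : 0 < (1 - δ ^ (k + 1 + 1)) * (1 - δ ^ (k + 1)) :=
    one_sub_pow_mul_one_sub_pow_pos hδ0.le hδ1 (by omega) (by omega)
  unfold marginalGain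
  rw [div_lt_div_iff₀ hden' hden, ← sub_pos]
  calc 0 < (1 - δ ^ 1) * (1 - δ ^ (k + 1)) * ((1 - δ) ^ 2 * δ ^ k * (1 + δ ^ (k + 1))) :=
        mul_pos hsame (by positivity)
    _ = _ := by ring

end

theorem welfare_succ_sub_of_eq {δ c h A : ℝ} (hδ0 : 0 ≤ δ) (hδ1 : δ ≠ 1) {W : ℕ → ℝ}
    (hW : ∀ k : ℕ, W k = A - c * (1 - δ) / (1 - δ ^ (k + 1)) - k * h) (k : ℕ) :
    W (k + 1) - W k = c * marginalGain δ (k + 1) - h := by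
  have hgain := one_sub_div_one_sub_pow_sub_succ (k := k + 1)
    (one_sub_pow_ne_zero hδ0 hδ1 (by omega)) (one_sub_pow_ne_zero hδ0 hδ1 (by omega))
  rw [hW, hW, ← hgain]
  push_cast
  ring

theorem welfare_first_differences_asymmetric_general
    (δ c h A : ℝ) (hδ0 : 0 < δ) (hδ1 : δ ≠ 1) (hc : 0 < c)
    (W : ℕ → ℝ)
    (hW : ∀ k : ℕ, W k = A - c * (1 - δ) / (1 - δ ^ (k + 1)) - k * h) :
    (∀ k : ℕ, 1 ≤ k →
      W k - W (k - 1)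
        = c * (1 - δ) ^ 2 * δ ^ k / ((1 - δ ^ (k + 1)) * (1 - δ ^ k)) - h) ∧
    (∀ k : ℕ, 1 ≤ k →
      0 < (1 - δ) ^ 2 * δ ^ k / ((1 - δ ^ (k + 1)) * (1 - δ ^ k))) ∧
    (∀ k : ℕ, 1 ≤ k →
      (1 - δ) ^ 2 * δ ^ (k + 1) / ((1 - δ ^ (k + 2)) * (1 - δ ^ (k + 1)))
        < (1 - δ) ^ 2 * δ ^ k / ((1 - δ ^ (k + 1)) * (1 - δ ^ k))) ∧
    (∀ k : ℕ, 1 ≤ k → W (k + 1) - W k < W k - W (k - 1)) := by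
  have hdiff (k : ℕ) (hk : 1 ≤ k) : W k - W (k - 1) = c * marginalGain δ k - h := by
    obtain ⟨n, rfl⟩ : ∃ n, k = n + 1 := ⟨k - 1, by omega⟩
    exact welfare_succ_sub_of_eq hδ0.le hδ1 hW n
  refine ⟨fun k hk => ?_, fun k hk => marginalGain_pos hδ0 hδ1 hk,
    fun k hk => marginalGain_succ_lt hδ0 hδ1 hk, fun k hk => ?_⟩
  · rw [hdiff k hk, marginalGain]
    ring
  · rw [hdiff k hk, welfare_succ_sub_of_eq hδ0.le hδ1 hW k]
    exact sub_lt_sub_right (mul_lt_mul_of_pos_left (marginalGain_succ_lt hδ0 hδ1 hk) hc) h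

/-- Properties of the welfare function
`W(k) = A − c·(1−δ)/(1−δ^{k+1}) − k·h` in the asymmetric case `δ ≠ 1`:
(a) the first-difference formula; (b) the coefficient
`(1−δ)²·δ^k/((1−δ^{k+1})(1−δ^k))` is positive and strictly decreasing for
`k ≥ 1`; consequently the first differences of `W` are strictly decreasing, so
`W` is unimodal in `k`. -/
theorem welfare_first_differences_asymmetric
    (δ c h A : ℝ) (hδ0 : 0 < δ) (hδ1 : δ ≠ 1) (hc : 0 < c) (hh : 0 < h)
    (W : ℕ → ℝ)
    (hW : ∀ k : ℕ, W k = A - c * (1 - δ) / (1 - δ ^ (k + 1)) - k * h) :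
    (∀ k : ℕ, 1 ≤ k →
      W k - W (k - 1)
        = c * (1 - δ) ^ 2 * δ ^ k / ((1 - δ ^ (k + 1)) * (1 - δ ^ k)) - h) ∧
    (∀ k : ℕ, 1 ≤ k →
      0 < (1 - δ) ^ 2 * δ ^ k / ((1 - δ ^ (k + 1)) * (1 - δ ^ k))) ∧
    (∀ k : ℕ, 1 ≤ k →
      (1 - δ) ^ 2 * δ ^ (k + 1) / ((1 - δ ^ (k + 2)) * (1 - δ ^ (k + 1)))
        < (1 - δ) ^ 2 * δ ^ k / ((1 - δ ^ (k + 1)) * (1 - δ ^ k))) ∧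
    (∀ k : ℕ, 1 ≤ k → W (k + 1) - W k < W k - W (k - 1)) :=
  welfare_first_differences_asymmetric_general δ c h A hδ0 hδ1 hc W hW
end

section
/- Let p, q ∈ (0,1) with p > q, so that δ := q(1−p)/(p(1−q)) ∈ (0,1). Let h > 0, α ∈ [0,1], and let r_HH, r_HL, r_LH, r_LL be reals with r_HH − r_HL ≥ r_LH − r_LL ≥ 0. Let k := ⌊q·α·(r_HH − r_HL)/h⌋ ∈ ℕ. Then (h/(q(1−p)))·(1 − δ^{k+1})/(δ^{k}·(1−δ)) > α·(r_LH − r_LL). (That is, the expected waiting cost EW¹_L(0) of the first L-type supply agent strictly exceeds his waiting benefit, so when p > q the first L-type supply agent never waits for a future H-type demand agent.) -/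
/-!
Since `δ < 1`, the factor `(1 − δ^{k+1})/(δ^k(1 − δ)) = ∑_{i ≤ k} δ^{-i}` is at least `k + 1`,
so `EW¹_L(0) ≥ h(k+1)/(q(1−p)) ≥ h(k+1)/q`. By the definition of the floor,
`h(k+1) > qα(r_HH − r_HL) ≥ qα(r_LH − r_LL)`, which gives the strict inequality.
-/

open Finset

theorem succ_mul_pow_mul_one_sub_le_one_sub_pow {R : Type*} [CommRing R] [LinearOrder R]
    [IsStrictOrderedRing R] {δ : R} (h0 : 0 ≤ δ) (h1 : δ ≤ 1) (k : ℕ) :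
    (k + 1) * (δ ^ k * (1 - δ)) ≤ 1 - δ ^ (k + 1) := by
  have hterm : ∀ i ∈ range (k + 1), δ ^ k ≤ δ ^ i := fun i hi ↦
    pow_le_pow_of_le_one h0 h1 (Nat.lt_succ_iff.mp (mem_range.mp hi))
  have hsum : (k + 1 : R) * δ ^ k ≤ ∑ i ∈ range (k + 1), δ ^ i := by
    simpa using card_nsmul_le_sum (range (k + 1)) (δ ^ ·) (δ ^ k) hterm
  rw [← geom_sum_mul_neg, ← mul_assoc]
  exact mul_le_mul_of_nonneg_right hsum (sub_nonneg.mpr h1)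

theorem succ_le_one_sub_pow_div {K : Type*} [Field K] [LinearOrder K] [IsStrictOrderedRing K]
    {δ : K} (h0 : 0 < δ) (h1 : δ < 1) (k : ℕ) :
    (k + 1 : K) ≤ (1 - δ ^ (k + 1)) / (δ ^ k * (1 - δ)) :=
  (le_div_iff₀ (mul_pos (pow_pos h0 k) (sub_pos.mpr h1))).mpr
    (succ_mul_pow_mul_one_sub_le_one_sub_pow h0.le h1.le k)

theorem odds_ratio_mem_Ioo {p q : ℝ} (hq0 : 0 < q) (hqp : q < p) (hp1 : p < 1) :
    q * (1 - p) / (p * (1 - q)) ∈ Set.Ioo 0 1 := by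
  have hp0 : 0 < p := hq0.trans hqp
  have hden : 0 < p * (1 - q) := mul_pos hp0 (by linarith)
  refine ⟨div_pos (mul_pos hq0 (by linarith)) hden, (div_lt_one hden).mpr ?_⟩
  nlinarith

theorem first_L_supply_never_waits_general
    (p q δ h α rHH rHL rLH rLL : ℝ)
    (hp : p ∈ Set.Ioo (0 : ℝ) 1) (hq : q ∈ Set.Ioo (0 : ℝ) 1) (hpq : p > q)
    (hδ : δ = q * (1 - p) / (p * (1 - q)))
    (hh : 0 < h) (hα : α ∈ Set.Icc (0 : ℝ) 1)
    (h1 : rHH - rHL ≥ rLH - rLL)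
    (k : ℕ) (hk : k = ⌊q * α * (rHH - rHL) / h⌋₊) :
    h / (q * (1 - p)) * ((1 - δ ^ (k + 1)) / (δ ^ k * (1 - δ)))
      > α * (rLH - rLL) := by
  obtain ⟨hq0, hq1⟩ := hq
  obtain ⟨hδ0, hδ1⟩ : δ ∈ Set.Ioo 0 1 := hδ ▸ odds_ratio_mem_Ioo hq0 hpq hp.2
  have h1p : 0 < 1 - p := sub_pos.mpr hp.2
  have hfloor : q * α * (rLH - rLL) < h * (k + 1) := calc
    q * α * (rLH - rLL) ≤ q * α * (rHH - rHL) :=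
      mul_le_mul_of_nonneg_left h1 (mul_nonneg hq0.le hα.1)
    _ < h * (k + 1) := by
      rw [← div_lt_iff₀' hh, hk]
      exact Nat.lt_floor_add_one _
  have hk1 : 0 < h * (k + 1) := by positivity
  calc α * (rLH - rLL) < h * (k + 1) / q := by
        rw [lt_div_iff₀ hq0]; linarith
    _ ≤ h * (k + 1) / (q * (1 - p)) :=
        div_le_div_of_nonneg_left hk1.le (by positivity)
          (mul_le_of_le_one_right hq0.le (by linarith))
    _ = h / (q * (1 - p)) * (k + 1) := by ring
    _ ≤ h / (q * (1 - p)) * ((1 - δ ^ (k + 1)) / (δ ^ k * (1 - δ))) :=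
        mul_le_mul_of_nonneg_left (succ_le_one_sub_pow_div hδ0 hδ1 k) (by positivity)

/-- When `p > q` (so that `δ = q(1−p)/(p(1−q)) ∈ (0,1)`), the expected waiting
cost `EW¹_L(0) = (h/(q(1−p)))·(1 − δ^{k+1})/(δ^k(1−δ))` of the first L-type
supply agent, with `k = ⌊q·α·(r_HH − r_HL)/h⌋`, strictly exceeds his waiting
benefit `α·(r_LH − r_LL)`: the first L-type supply agent never waits for a
future H-type demand agent. -/
theorem first_L_supply_never_waits
    (p q δ h α rHH rHL rLH rLL : ℝ)
    (hp : p ∈ Set.Ioo (0 : ℝ) 1) (hq : q ∈ Set.Ioo (0 : ℝ) 1) (hpq : p > q)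
    (hδ : δ = q * (1 - p) / (p * (1 - q)))
    (hh : 0 < h) (hα : α ∈ Set.Icc (0 : ℝ) 1)
    (h1 : rHH - rHL ≥ rLH - rLL) (h2 : rLH - rLL ≥ 0)
    (k : ℕ) (hk : k = ⌊q * α * (rHH - rHL) / h⌋₊) :
    h / (q * (1 - p)) * ((1 - δ ^ (k + 1)) / (δ ^ k * (1 - δ)))
      > α * (rLH - rLL) :=
  first_L_supply_never_waits_general p q δ h α rHH rHL rLH rLL hp hq hpq hδ hh hα h1 k hk
end

section
/- Let c > 0 and h > 0 with c ≥ 2h, and let x := (−h + √(h² + 4hc))/(2h). Then: (a) √(c/(2h)) ≤ x; (b) 2·√(c/(2h)) ≥ x + 1; (c) c/h ≥ x + 1. Moreover, c ≥ 6h if and only if c/(2h) ≥ x + 1. -/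
/-!
Write `a = c / h`. The number `x` is the nonnegative root of `x ^ 2 + x = a`, and `c / (2h) = a / 2`,
so every claim becomes a polynomial inequality in `x` alone. Since `y ↦ y ^ 2 + y` is increasing on
`[0, ∞)`, the hypothesis `c ≥ 2h` means `x ≥ 1` and `c ≥ 6h` means `x ≥ 2`; after squaring, (a), (b)
and (c) reduce to `x ≥ 1`, and `x + 1 ≤ (x ^ 2 + x) / 2` is `x ≥ 2`.
-/

lemma sq_add_self_eq_of_eq_quadratic_root {c h x : ℝ} (hh : 0 < h) (hc : 0 ≤ c)
    (hx : x = (-h + √(h ^ 2 + 4 * h * c)) / (2 * h)) : x ^ 2 + x = c / h := by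
  have hs : √(h ^ 2 + 4 * h * c) ^ 2 = h ^ 2 + 4 * h * c := Real.sq_sqrt (by positivity)
  generalize √(h ^ 2 + 4 * h * c) = s at hx hs
  subst hx
  field_simp
  linear_combination hs

lemma nonneg_of_eq_quadratic_root {c h x : ℝ} (hh : 0 < h) (hc : 0 ≤ c)
    (hx : x = (-h + √(h ^ 2 + 4 * h * c)) / (2 * h)) : 0 ≤ x := by
  have : h ≤ √(h ^ 2 + 4 * h * c) := Real.le_sqrt_of_sq_le (by nlinarith)
  rw [hx]
  exact div_nonneg (by linarith) (by positivity)

lemma le_iff_sq_add_self_le {x y : ℝ} (hx : 0 ≤ x) (hy : 0 ≤ y) :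
    x ≤ y ↔ x ^ 2 + x ≤ y ^ 2 + y :=
  ⟨fun _ => by nlinarith, fun _ => by nlinarith⟩

lemma sqrt_half_sq_add_self_le {x : ℝ} (hx : 1 ≤ x) : √((x ^ 2 + x) / 2) ≤ x :=
  (Real.sqrt_le_left (by linarith)).2 (by nlinarith)

lemma add_one_le_two_mul_sqrt_half_sq_add_self {x : ℝ} (hx : 1 ≤ x) :
    x + 1 ≤ 2 * √((x ^ 2 + x) / 2) := by
  rw [← div_le_iff₀' two_pos, Real.le_sqrt (by linarith) (by positivity)]
  nlinarith

lemma add_one_le_half_sq_add_self_iff {x : ℝ} (hx : 0 ≤ x) :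
    x + 1 ≤ (x ^ 2 + x) / 2 ↔ 2 ≤ x := by
  rw [le_div_iff₀ two_pos, show (x ^ 2 + x) = x * (x + 1) by ring, mul_comm,
    mul_le_mul_iff_of_pos_right (by linarith)]

theorem threshold_comparison_large_supermodularity_general
    (c h x : ℝ) (hh : 0 < h) (hc : 2 * h ≤ c)
    (hx : x = (-h + Real.sqrt (h ^ 2 + 4 * h * c)) / (2 * h)) :
    (Real.sqrt (c / (2 * h)) ≤ x) ∧
    (x + 1 ≤ 2 * Real.sqrt (c / (2 * h))) ∧
    (x + 1 ≤ c / h) ∧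
    (6 * h ≤ c ↔ x + 1 ≤ c / (2 * h)) := by
  have hc0 : 0 ≤ c := by linarith
  have hx0 : 0 ≤ x := nonneg_of_eq_quadratic_root hh hc0 hx
  have hxa : x ^ 2 + x = c / h := sq_add_self_eq_of_eq_quadratic_root hh hc0 hx
  have hx1 : 1 ≤ x := by
    rw [le_iff_sq_add_self_le zero_le_one hx0, hxa, le_div_iff₀ hh]
    linarith
  have h6 : 6 * h ≤ c ↔ 2 ≤ x := by
    rw [← le_div_iff₀ hh, ← hxa, le_iff_sq_add_self_le zero_le_two hx0]
    norm_num
  rw [mul_comm 2 h, ← div_div, ← hxa, h6]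
  exact ⟨sqrt_half_sq_add_self_le hx1, add_one_le_two_mul_sqrt_half_sq_add_self hx1,
    by nlinarith, (add_one_le_half_sq_add_self_iff hx0).symm⟩

/-- Comparison of the full-backlog threshold real `√(c/(2h))` with the
one-sided-backlog threshold real `x = (−h + √(h² + 4hc))/(2h)` when `c ≥ 2h`:
(a) `√(c/(2h)) ≤ x`; (b) `2√(c/(2h)) ≥ x + 1`; (c) `c/h ≥ x + 1`; and
`c ≥ 6h` iff `c/(2h) ≥ x + 1`. -/
theorem threshold_comparison_large_supermodularity
    (c h x : ℝ) (hc0 : 0 < c) (hh : 0 < h) (hc : 2 * h ≤ c)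
    (hx : x = (-h + Real.sqrt (h ^ 2 + 4 * h * c)) / (2 * h)) :
    (Real.sqrt (c / (2 * h)) ≤ x) ∧
    (x + 1 ≤ 2 * Real.sqrt (c / (2 * h))) ∧
    (x + 1 ≤ c / h) ∧
    (6 * h ≤ c ↔ x + 1 ≤ c / (2 * h)) :=
  threshold_comparison_large_supermodularity_general c h x hh hc hx
end

section
/- Let p ∈ (0,1), h > 0, r ≥ 0, and r_HH, r_LL ∈ ℝ, and set c := p(1−p)·r. Define k_FB := ⌊√(c/(2h))⌋ and k_OB := ⌊(−h + √(h² + 4hc))/(2h)⌋ (both in ℕ), and define W_FB := p·r_HH + (1−p)·r_LL − c/(2k_FB+1) − (2·k_FB·(k_FB+1)/(2k_FB+1))·h, W_OB := p·r_HH + (1−p)·r_LL − c/(k_OB+1) − k_OB·h, and W_NB := p·r_HH + (1−p)·r_LL − c. Then W_FB ≥ W_OB ≥ W_NB. -/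
/-!
Write `F k = (c + 2k(k+1)h)/(2k+1)` and `G k = c/(k+1) + kh` for the full- and one-sided-backlog
costs at threshold `k`, so that the three welfares are the common matching value minus `F kFB`,
`G kOB` and `c = G 0`. The difference `F m - F (m+1)` has the sign of `c - 2h(m+1)²`, so `F` first
decreases and then increases, with minimum at `kFB = ⌊√(c/(2h))⌋`. The threshold `kOB` is the floor
of the positive root of `h x(x+1) = c`, hence `h kOB (kOB+1) ≤ c`, and this inequality alone gives
both `G kOB ≤ c` and `F kOB ≤ G kOB`. Therefore `F kFB ≤ F kOB ≤ G kOB ≤ c`.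
-/

noncomputable def fullBacklogCost (c h : ℝ) (k : ℕ) : ℝ :=
  c / (2 * (k : ℝ) + 1) + (2 * (k : ℝ) * ((k : ℝ) + 1) / (2 * (k : ℝ) + 1)) * h

noncomputable def oneSidedBacklogCost (c h : ℝ) (k : ℕ) : ℝ :=
  c / ((k : ℝ) + 1) + (k : ℝ) * h

theorem Nat.apply_le_of_succ_le_of_le_succ {α : Type*} [Preorder α] (f : ℕ → α) {K : ℕ}
    (hdown : ∀ n < K, f (n + 1) ≤ f n) (hup : ∀ n, K ≤ n → f n ≤ f (n + 1)) (m : ℕ) :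
    f K ≤ f m := by
  rcases le_total m K with hmK | hKm
  · exact Nat.decreasingInduction (motive := fun n _ => f K ≤ f n)
      (fun n hn ih => ih.trans (hdown n hn)) le_rfl hmK
  · exact Nat.rel_of_forall_rel_succ_of_le_of_le (· ≤ ·) hup le_rfl hKm

section Costs

variable {c h : ℝ}

theorem fullBacklogCost_eq (c h : ℝ) (k : ℕ) :
    fullBacklogCost c h k = (c + 2 * k * (k + 1) * h) / (2 * k + 1) := by
  unfold fullBacklogCost
  field_simp

theorem fullBacklogCost_succ_le_iff (m : ℕ) :
    fullBacklogCost c h (m + 1) ≤ fullBacklogCost c h m ↔ 2 * h * ((m : ℝ) + 1) ^ 2 ≤ c := by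
  rw [fullBacklogCost_eq, fullBacklogCost_eq, div_le_div_iff₀ (by positivity) (by positivity)]
  push_cast
  constructor <;> intro <;> linarith

theorem fullBacklogCost_le_succ_iff (m : ℕ) :
    fullBacklogCost c h m ≤ fullBacklogCost c h (m + 1) ↔ c ≤ 2 * h * ((m : ℝ) + 1) ^ 2 := by
  rw [fullBacklogCost_eq, fullBacklogCost_eq, div_le_div_iff₀ (by positivity) (by positivity)]
  push_cast
  constructor <;> intro <;> linarith

theorem fullBacklogCost_floor_sqrt_le (hh : 0 < h) (m : ℕ) :
    fullBacklogCost c h ⌊√(c / (2 * h))⌋₊ ≤ fullBacklogCost c h m := by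
  have hlt : ∀ n : ℕ, n < ⌊√(c / (2 * h))⌋₊ ↔ 2 * h * ((n : ℝ) + 1) ^ 2 ≤ c := fun n => by
    rw [Nat.lt_iff_add_one_le, Nat.le_floor_iff (Real.sqrt_nonneg _),
      Real.le_sqrt' (by positivity), le_div_iff₀ (by positivity)]
    push_cast
    ring_nf
  refine Nat.apply_le_of_succ_le_of_le_succ _
    (fun n hn => (fullBacklogCost_succ_le_iff n).2 ((hlt n).1 hn))
    (fun n hn => (fullBacklogCost_le_succ_iff n).2 ?_) m
  exact le_of_not_ge fun H => hn.not_gt ((hlt n).2 H)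

theorem mul_floor_quadratic_root_le (hh : 0 < h) (hc : 0 ≤ c) :
    h * (⌊(-h + √(h ^ 2 + 4 * h * c)) / (2 * h)⌋₊ : ℝ)
      * ((⌊(-h + √(h ^ 2 + 4 * h * c)) / (2 * h)⌋₊ : ℝ) + 1) ≤ c := by
  set k := ⌊(-h + √(h ^ 2 + 4 * h * c)) / (2 * h)⌋₊
  have hsqrt : h ≤ √(h ^ 2 + 4 * h * c) :=
    Real.le_sqrt_of_sq_le (by nlinarith)
  have hk : (k : ℝ) ≤ (-h + √(h ^ 2 + 4 * h * c)) / (2 * h) :=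
    Nat.floor_le (div_nonneg (by linarith) (by positivity))
  rw [le_div_iff₀ (by positivity)] at hk
  have hsq : (2 * h * k + h) ^ 2 ≤ h ^ 2 + 4 * h * c :=
    (Real.le_sqrt (by positivity) (by positivity)).1 (by linarith)
  nlinarith

theorem mul_natCast_mul_succ_le_mul (hc : 0 ≤ c) {k : ℕ} (hk : h * k * (k + 1) ≤ c) :
    h * k * (k + 1) ≤ c * k := by
  rcases k with _ | k
  · simp
  · push_cast at hk ⊢
    nlinarith

theorem oneSidedBacklogCost_le (hc : 0 ≤ c) (k : ℕ) (hk : h * k * (k + 1) ≤ c) :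
    oneSidedBacklogCost c h k ≤ c := by
  unfold oneSidedBacklogCost
  rw [← le_sub_iff_add_le, div_le_iff₀ (by positivity)]
  linarith [mul_natCast_mul_succ_le_mul hc hk]

theorem fullBacklogCost_le_oneSidedBacklogCost (hc : 0 ≤ c) (k : ℕ)
    (hk : h * k * (k + 1) ≤ c) : fullBacklogCost c h k ≤ oneSidedBacklogCost c h k := by
  have hcost : oneSidedBacklogCost c h k = (c + k * (k + 1) * h) / (k + 1) := by
    unfold oneSidedBacklogCost
    field_simp
  rw [fullBacklogCost_eq, hcost, div_le_div_iff₀ (by positivity) (by positivity)]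
  linarith [mul_natCast_mul_succ_le_mul hc hk]

end Costs

/-- Welfare ordering across patience regimes in the centralized setting with
symmetric arrivals `p = q`: the full-backlog optimal welfare is at least the
one-sided-backlog optimal welfare, which is at least the no-backlog welfare. -/
theorem centralized_welfare_ordering
    (p h r rHH rLL c : ℝ) (hp : p ∈ Set.Ioo (0 : ℝ) 1) (hh : 0 < h)
    (hr : 0 ≤ r) (hc : c = p * (1 - p) * r)
    (kFB kOB : ℕ)
    (hkFB : kFB = ⌊Real.sqrt (c / (2 * h))⌋₊)
    (hkOB : kOB = ⌊(-h + Real.sqrt (h ^ 2 + 4 * h * c)) / (2 * h)⌋₊)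
    (WFB WOB WNB : ℝ)
    (hWFB : WFB = p * rHH + (1 - p) * rLL - c / (2 * (kFB : ℝ) + 1)
      - (2 * (kFB : ℝ) * ((kFB : ℝ) + 1) / (2 * (kFB : ℝ) + 1)) * h)
    (hWOB : WOB = p * rHH + (1 - p) * rLL - c / ((kOB : ℝ) + 1) - (kOB : ℝ) * h)
    (hWNB : WNB = p * rHH + (1 - p) * rLL - c) :
    WNB ≤ WOB ∧ WOB ≤ WFB := by
  have hc0 : 0 ≤ c := hc ▸ mul_nonneg (mul_nonneg hp.1.le (sub_nonneg.2 hp.2.le)) hr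
  have hkOB_le : h * kOB * (kOB + 1) ≤ c := hkOB ▸ mul_floor_quadratic_root_le hh hc0
  have hOB : oneSidedBacklogCost c h kOB ≤ c := oneSidedBacklogCost_le hc0 kOB hkOB_le
  have hFB : fullBacklogCost c h kFB ≤ oneSidedBacklogCost c h kOB :=
    (hkFB ▸ fullBacklogCost_floor_sqrt_le hh kOB).trans
      (fullBacklogCost_le_oneSidedBacklogCost hc0 kOB hkOB_le)
  rw [fullBacklogCost] at hFB
  rw [oneSidedBacklogCost] at hOB hFB
  constructor <;> linarith
end

section
/- Let h > 0, c ≥ 0, B ∈ ℝ, and k ∈ ℕ, and define W_FB(k) := B − c/(2k+1) − (2k(k+1)/(2k+1))·h, W_OB(k) := B − c/(k+1) − k·h, and W_NB := B − c. Then W_OB(k) − W_NB = (k/(k+1))·(c − (k+1)h) and W_FB(k) − W_OB(k) = (k/((k+1)(2k+1)))·(c − (k+1)h). Consequently: if c ≥ (k+1)·h then W_FB(k) ≥ W_OB(k) ≥ W_NB, and if c ≤ (k+1)·h then W_FB(k) ≤ W_OB(k) ≤ W_NB. -/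
/-! Both welfare gaps are nonnegative multiples of the single quantity `c - (k+1)h`: after
clearing denominators each difference factors through it. Its sign therefore orders
`W_NB`, `W_OB(k)`, `W_FB(k)` all at once. -/

section WelfareGaps

variable {h c B k : ℝ}

theorem oneSided_sub_noBacklog (hk : k + 1 ≠ 0) :
    (B - c / (k + 1) - k * h) - (B - c) = k / (k + 1) * (c - (k + 1) * h) := by
  field_simp
  ring

theorem fullBacklog_sub_oneSided (hk : k + 1 ≠ 0) (hk' : 2 * k + 1 ≠ 0) :
    (B - c / (2 * k + 1) - 2 * k * (k + 1) / (2 * k + 1) * h) - (B - c / (k + 1) - k * h)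
      = k / ((k + 1) * (2 * k + 1)) * (c - (k + 1) * h) := by
  field_simp
  ring

end WelfareGaps

theorem decentralized_welfare_sign_lemma_general
    (h c B : ℝ) (k : ℕ)
    (WFB WOB WNB : ℝ)
    (hWFB : WFB = B - c / (2 * (k : ℝ) + 1)
      - (2 * (k : ℝ) * ((k : ℝ) + 1) / (2 * (k : ℝ) + 1)) * h)
    (hWOB : WOB = B - c / ((k : ℝ) + 1) - (k : ℝ) * h)
    (hWNB : WNB = B - c) :
    (WOB - WNB = ((k : ℝ) / ((k : ℝ) + 1)) * (c - ((k : ℝ) + 1) * h)) ∧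
    (WFB - WOB = ((k : ℝ) / (((k : ℝ) + 1) * (2 * (k : ℝ) + 1)))
      * (c - ((k : ℝ) + 1) * h)) ∧
    (((k : ℝ) + 1) * h ≤ c → WNB ≤ WOB ∧ WOB ≤ WFB) ∧
    (c ≤ ((k : ℝ) + 1) * h → WFB ≤ WOB ∧ WOB ≤ WNB) := by
  subst hWFB hWOB hWNB
  have hk : (k : ℝ) + 1 ≠ 0 := by positivity
  have hk' : 2 * (k : ℝ) + 1 ≠ 0 := by positivity
  have hOB := oneSided_sub_noBacklog (B := B) (c := c) (h := h) hk
  have hFB := fullBacklog_sub_oneSided (B := B) (c := c) (h := h) hk hk'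
  have hα : 0 ≤ (k : ℝ) / ((k : ℝ) + 1) := by positivity
  have hβ : 0 ≤ (k : ℝ) / (((k : ℝ) + 1) * (2 * (k : ℝ) + 1)) := by positivity
  refine ⟨hOB, hFB, fun hle => ?_, fun hle => ?_⟩
  · have hd : 0 ≤ c - ((k : ℝ) + 1) * h := sub_nonneg.mpr hle
    exact ⟨sub_nonneg.mp (hOB ▸ mul_nonneg hα hd), sub_nonneg.mp (hFB ▸ mul_nonneg hβ hd)⟩
  · have hd : c - ((k : ℝ) + 1) * h ≤ 0 := sub_nonpos.mpr hle
    exact ⟨sub_nonpos.mp (hFB ▸ mul_nonpos_of_nonneg_of_nonpos hβ hd),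
      sub_nonpos.mp (hOB ▸ mul_nonpos_of_nonneg_of_nonpos hα hd)⟩

/-- Sign lemma for the decentralized welfare comparison at a common equilibrium
threshold `k`: explicit expressions for `W_OB(k) − W_NB` and
`W_FB(k) − W_OB(k)`, and the resulting orderings depending on the sign of
`c − (k+1)h`. -/
theorem decentralized_welfare_sign_lemma
    (h c B : ℝ) (hh : 0 < h) (hc : 0 ≤ c) (k : ℕ)
    (WFB WOB WNB : ℝ)
    (hWFB : WFB = B - c / (2 * (k : ℝ) + 1)
      - (2 * (k : ℝ) * ((k : ℝ) + 1) / (2 * (k : ℝ) + 1)) * h)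
    (hWOB : WOB = B - c / ((k : ℝ) + 1) - (k : ℝ) * h)
    (hWNB : WNB = B - c) :
    (WOB - WNB = ((k : ℝ) / ((k : ℝ) + 1)) * (c - ((k : ℝ) + 1) * h)) ∧
    (WFB - WOB = ((k : ℝ) / (((k : ℝ) + 1) * (2 * (k : ℝ) + 1)))
      * (c - ((k : ℝ) + 1) * h)) ∧
    (((k : ℝ) + 1) * h ≤ c → WNB ≤ WOB ∧ WOB ≤ WFB) ∧
    (c ≤ ((k : ℝ) + 1) * h → WFB ≤ WOB ∧ WOB ≤ WNB) :=
  decentralized_welfare_sign_lemma_general h c B k WFB WOB WNB hWFB hWOB hWNB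
end

section
/- Let p ∈ (0,1), h > 0, α ∈ [0,1], r ≥ 0, and R := r_HH − r_HL > 0, and set c := p(1−p)·r and k := ⌊p·α·R/h⌋ ∈ ℕ. Define W_FB := B − c/(2k+1) − (2k(k+1)/(2k+1))·h, W_OB := B − c/(k+1) − k·h, and W_NB := B − c, where B := p·r_HH + (1−p)·r_LL. Then: (1) if α ≤ (1−p)·r/(2R), then W_FB ≥ W_OB ≥ W_NB; and (2) if α ≥ (1−p)·r/R, then W_FB ≤ W_OB ≤ W_NB. -/
/-!
Both welfare gaps `W_OB - W_NB` and `W_FB - W_OB` are positive multiples of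
`k (c - (k + 1) h)`, so the ranking is decided by whether the mismatch loss `c` exceeds the
waiting cost `(k + 1) h`. The floor gives `k h ≤ p α R < (k + 1) h`; case (1) means
`2 p α R ≤ c`, whence `(k + 1) h ≤ 2 k h ≤ c` when `k ≥ 1`, and case (2) means
`c ≤ p α R < (k + 1) h`.
-/

def backlogGain (c h k : ℝ) : ℝ := k * (c - (k + 1) * h)

def noBacklogWelfare (B c : ℝ) : ℝ := B - c

noncomputable def oneSidedBacklogWelfare (B c h k : ℝ) : ℝ := B - c / (k + 1) - k * h

noncomputable def fullBacklogWelfare (B c h k : ℝ) : ℝ :=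
  B - c / (2 * k + 1) - 2 * k * (k + 1) / (2 * k + 1) * h

section WelfareGaps

variable {k B c h : ℝ}

theorem oneSidedBacklogWelfare_sub_noBacklogWelfare (hk : 0 ≤ k) :
    oneSidedBacklogWelfare B c h k - noBacklogWelfare B c = backlogGain c h k / (k + 1) := by
  unfold backlogGain oneSidedBacklogWelfare noBacklogWelfare
  field_simp
  ring

theorem fullBacklogWelfare_sub_oneSidedBacklogWelfare (hk : 0 ≤ k) :
    fullBacklogWelfare B c h k - oneSidedBacklogWelfare B c h k
      = backlogGain c h k / ((k + 1) * (2 * k + 1)) := by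
  unfold backlogGain fullBacklogWelfare oneSidedBacklogWelfare
  field_simp
  ring

theorem welfare_chain_of_nonneg (hk : 0 ≤ k) (hs : 0 ≤ backlogGain c h k) :
    noBacklogWelfare B c ≤ oneSidedBacklogWelfare B c h k ∧
      oneSidedBacklogWelfare B c h k ≤ fullBacklogWelfare B c h k := by
  constructor
  · rw [← sub_nonneg, oneSidedBacklogWelfare_sub_noBacklogWelfare hk]
    exact div_nonneg hs (by positivity)
  · rw [← sub_nonneg, fullBacklogWelfare_sub_oneSidedBacklogWelfare hk]
    exact div_nonneg hs (by positivity)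

theorem welfare_chain_of_nonpos (hk : 0 ≤ k) (hs : backlogGain c h k ≤ 0) :
    fullBacklogWelfare B c h k ≤ oneSidedBacklogWelfare B c h k ∧
      oneSidedBacklogWelfare B c h k ≤ noBacklogWelfare B c := by
  constructor
  · rw [← sub_nonpos, fullBacklogWelfare_sub_oneSidedBacklogWelfare hk]
    exact div_nonpos_of_nonpos_of_nonneg hs (by positivity)
  · rw [← sub_nonpos, oneSidedBacklogWelfare_sub_noBacklogWelfare hk]
    exact div_nonpos_of_nonpos_of_nonneg hs (by positivity)

end WelfareGaps

theorem Nat.floor_div_mul_le_and_lt {a h : ℝ} (ha : 0 ≤ a) (hh : 0 < h) :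
    ⌊a / h⌋₊ * h ≤ a ∧ a < (⌊a / h⌋₊ + 1) * h :=
  ⟨(le_div_iff₀ hh).mp (Nat.floor_le (div_nonneg ha hh.le)),
    (div_lt_iff₀ hh).mp (Nat.lt_floor_add_one _)⟩

theorem backlogGain_nonneg_of_two_mul_le {k : ℕ} {a c h : ℝ} (hh : 0 < h) (hka : k * h ≤ a)
    (hac : 2 * a ≤ c) : 0 ≤ backlogGain c h k := by
  unfold backlogGain
  rcases Nat.eq_zero_or_pos k with rfl | hk
  · simp
  have hk1 : (1 : ℝ) ≤ k := by exact_mod_cast hk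
  exact mul_nonneg k.cast_nonneg (by nlinarith)

theorem backlogGain_nonpos_of_le {k : ℕ} {a c h : ℝ} (hca : c ≤ a) (hak : a < (k + 1) * h) :
    backlogGain c h k ≤ 0 :=
  mul_nonpos_of_nonneg_of_nonpos k.cast_nonneg (by linarith)

theorem decentralized_welfare_comparison_general
    (p h α r R c B : ℝ) (k : ℕ)
    (hp : p ∈ Set.Ioo (0 : ℝ) 1) (hh : 0 < h) (hα : α ∈ Set.Icc (0 : ℝ) 1)
    (hRpos : 0 < R)
    (hc : c = p * (1 - p) * r)
    (hk : k = ⌊p * α * R / h⌋₊)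
    (WFB WOB WNB : ℝ)
    (hWFB : WFB = B - c / (2 * (k : ℝ) + 1)
      - (2 * (k : ℝ) * ((k : ℝ) + 1) / (2 * (k : ℝ) + 1)) * h)
    (hWOB : WOB = B - c / ((k : ℝ) + 1) - (k : ℝ) * h)
    (hWNB : WNB = B - c) :
    (α ≤ (1 - p) * r / (2 * R) → WNB ≤ WOB ∧ WOB ≤ WFB) ∧
    (α ≥ (1 - p) * r / R → WFB ≤ WOB ∧ WOB ≤ WNB) := by
  obtain ⟨hfloor_le, hlt_floor⟩ : (k : ℝ) * h ≤ p * α * R ∧ p * α * R < (k + 1) * h :=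
    hk ▸ Nat.floor_div_mul_le_and_lt (mul_nonneg (mul_nonneg hp.1.le hα.1) hRpos.le) hh
  subst hWFB hWOB hWNB hc
  constructor
  · intro hα_le
    have hαR : α * (2 * R) ≤ (1 - p) * r := (le_div_iff₀ (by positivity)).mp hα_le
    have hpαR : 2 * (p * α * R) ≤ p * (1 - p) * r := by nlinarith [hp.1]
    exact welfare_chain_of_nonneg k.cast_nonneg (backlogGain_nonneg_of_two_mul_le hh hfloor_le hpαR)
  · intro hα_ge
    have hαR : (1 - p) * r ≤ α * R := (div_le_iff₀ hRpos).mp hα_ge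
    have hpαR : p * (1 - p) * r ≤ p * α * R := by nlinarith [hp.1]
    exact welfare_chain_of_nonpos k.cast_nonneg (backlogGain_nonpos_of_le hpαR hlt_floor)

/-- Decentralized welfare comparison across patience regimes (Proposition 10,
cases (1) and (2)) with symmetric arrivals `p = q` and equilibrium threshold
`k = ⌊p·α·R/h⌋`, `R = r_HH − r_HL > 0`: if `α ≤ (1−p)r/(2R)` then
`W_FB ≥ W_OB ≥ W_NB`, and if `α ≥ (1−p)r/R` then `W_FB ≤ W_OB ≤ W_NB`. -/
theorem decentralized_welfare_comparison
    (p h α r rHH rHL rLL R c B : ℝ) (k : ℕ)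
    (hp : p ∈ Set.Ioo (0 : ℝ) 1) (hh : 0 < h) (hα : α ∈ Set.Icc (0 : ℝ) 1)
    (hr : 0 ≤ r) (hR : R = rHH - rHL) (hRpos : 0 < R)
    (hc : c = p * (1 - p) * r) (hB : B = p * rHH + (1 - p) * rLL)
    (hk : k = ⌊p * α * R / h⌋₊)
    (WFB WOB WNB : ℝ)
    (hWFB : WFB = B - c / (2 * (k : ℝ) + 1)
      - (2 * (k : ℝ) * ((k : ℝ) + 1) / (2 * (k : ℝ) + 1)) * h)
    (hWOB : WOB = B - c / ((k : ℝ) + 1) - (k : ℝ) * h)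
    (hWNB : WNB = B - c) :
    (α ≤ (1 - p) * r / (2 * R) → WNB ≤ WOB ∧ WOB ≤ WFB) ∧
    (α ≥ (1 - p) * r / R → WFB ≤ WOB ∧ WOB ≤ WNB) :=
  decentralized_welfare_comparison_general p h α r R c B k hp hh hα hRpos hc hk WFB WOB WNB hWFB
    hWOB hWNB
end

section
/- For h > 0 define k(h) := ⌊75/h⌋ ∈ ℕ and W(h) := 400 − 175/(k(h)+1) − k(h)·h. Then W(75/2) < W(38) and W(38) > W(50); in particular, since 75/2 < 38 < 50, the function h ↦ W(h) is neither nonincreasing nor nondecreasing on (0,∞), i.e., the equilibrium social welfare of the decentralized system is non-monotonic in the unit waiting cost. -/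
/-- Non-monotonicity of the decentralized equilibrium social welfare in the
unit waiting cost: with `k(h) = ⌊75/h⌋` and
`W(h) = 400 − 175/(k(h)+1) − k(h)·h` (parameters `p = q = 1/2`, `α = 1/5`,
payoffs `(800, 50, 50, 0)`), we have `W(75/2) < W(38)` and `W(38) > W(50)`;
in particular `W` is neither nonincreasing nor nondecreasing on `(0, ∞)`. -/
theorem decentralized_welfare_nonmonotone
    (k : ℝ → ℕ) (W : ℝ → ℝ)
    (hk : ∀ h : ℝ, k h = ⌊(75 : ℝ) / h⌋₊)
    (hW : ∀ h : ℝ, W h = 400 - 175 / ((k h : ℝ) + 1) - (k h : ℝ) * h) :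
    W (75 / 2) < W 38 ∧ W 50 < W 38 ∧
    ¬(∀ a b : ℝ, 0 < a → a ≤ b → W a ≤ W b) ∧
    ¬(∀ a b : ℝ, 0 < a → a ≤ b → W b ≤ W a) := by
  have k_at_75_div_2 : k (75 / 2) = 2 := by rw [hk, Nat.floor_eq_iff (by norm_num)]; norm_num
  have k_at_38 : k 38 = 1 := by rw [hk, Nat.floor_eq_iff (by norm_num)]; norm_num
  have k_at_50 : k 50 = 1 := by rw [hk, Nat.floor_eq_iff (by norm_num)]; norm_num
  have rises : W (75 / 2) < W 38 := by
    rw [hW, hW, k_at_75_div_2, k_at_38]; norm_num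
  have falls : W 50 < W 38 := by
    rw [hW, hW, k_at_50, k_at_38]; norm_num
  refine ⟨rises, falls, fun mono => ?_, fun anti => ?_⟩
  · exact (mono 38 50 (by norm_num) (by norm_num)).not_gt falls
  · exact (anti (75 / 2) 38 (by norm_num) (by norm_num)).not_gt rises
end
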